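/- Suppose γ: ℝ² → ℝ is C² away from 0, positively homogeneous of degree one, positive on 𝕊¹, and satisfies γ(−n) < 3γ(n) for all unit vectors n. Then there exists a function k: 𝕊¹ → ℝ such that for all nonzero h, ĥ ∈ ℝ², with n = −h^⊥/|h|, the stability inequality γ(−ĥ^⊥) − γ(−h^⊥) ≤ (Z_k(n) ĥ/|h|)·(ĥ − h) holds, where Z_k(n) = γ(n)I₂ − n∇γ(n)ᵀ − ∇γ(n)nᵀ + k(n)nnᵀ. -/

import Mathlib

open scoped RealInnerProductSpace
noncomputable section
abbrev E := EuclideanSpace ℝ (Fin 2)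
def toE (v : Fin 2 → ℝ) : E := (WithLp.equiv 2 (Fin 2 → ℝ)).symm v
def toV (p : E) : Fin 2 → ℝ := fun i => p i
/-- clockwise rotation by π/2 : (a,b)^⊥ = (b,-a) -/
def perp (p : E) : E := toE ![p 1, -(p 0)]

/-- symmetrized surface energy matrix Z_k(n) = γ(n)I₂ − n∇γ(n)ᵀ − ∇γ(n)nᵀ + k nnᵀ -/
def Zmat (γ : E → ℝ) (k : ℝ) (n : E) : Matrix (Fin 2) (Fin 2) ℝ :=
  γ n • (1 : Matrix (Fin 2) (Fin 2) ℝ)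
    - Matrix.vecMulVec (toV n) (toV (gradient γ n))
    - Matrix.vecMulVec (toV (gradient γ n)) (toV n)
    + k • Matrix.vecMulVec (toV n) (toV n)

/-!
Write `n` for the unit normal, `t = perp n = h / ‖h‖` and `w = hh = α t + β n`. Expanding
`Z_k(n)` in the frame `(t, n)` and using Euler's identity `Dγ(n) n = γ(n)`, the inequality becomes
`γ(q) + Dγ(n) q ≤ r γ(n) + (2 ⟪n, q⟫ Dγ(n) q - γ(n) ‖q‖² + k (‖q‖² - ⟪n, q⟫²)) / r` for
`q = -perp w` and `r = ‖h‖`. By homogeneity and AM-GM in `‖q‖` it suffices to bound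
`sphereDefect γ n u` by a multiple of `1 - ⟪u, n⟫²` on the unit circle. The defect is `C²`,
vanishes to second order at `n`, is bounded on the compact circle, and at `-n` equals
`(γ(-n) - γ(n))² - 4 γ(n)²`, which is negative precisely because `0 < γ(-n) < 3 γ(n)`.
-/

open Filter Topology Asymptotics

theorem ContDiffAt.isBigO_sub_sub_fderiv {F G : Type*} [NormedAddCommGroup F] [NormedSpace ℝ F]
    [NormedAddCommGroup G] [NormedSpace ℝ G] {f : F → G} {x : F} (hf : ContDiffAt ℝ 2 f x) :
    (fun y => f y - f x - fderiv ℝ f x (y - x)) =O[𝓝 x] fun y => ‖y - x‖ ^ 2 := by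
  have hdiff : ∀ᶠ y in 𝓝 x, DifferentiableAt ℝ f y :=
    (hf.eventually (by simp)).mono fun y hy => hy.differentiableAt (by norm_num)
  have hD : DifferentiableAt ℝ (fderiv ℝ f) x :=
    (hf.fderiv_right (m := 1) (by norm_num)).differentiableAt (by norm_num)
  obtain ⟨C, hC0, hC⟩ := hD.isBigO_sub.exists_nonneg
  obtain ⟨ε, hε, hball⟩ := Metric.eventually_nhds_iff_ball.1 (hdiff.and hC.bound)
  refine IsBigO.of_bound C ?_
  filter_upwards [Metric.ball_mem_nhds x hε] with y hy
  have hsub : Metric.closedBall x ‖y - x‖ ⊆ Metric.ball x ε :=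
    Metric.closedBall_subset_ball (by simpa [dist_eq_norm] using hy)
  have key := (convex_closedBall x ‖y - x‖).norm_image_sub_le_of_norm_hasFDerivWithin_le
    (f := fun z => f z - fderiv ℝ f x z) (f' := fun z => fderiv ℝ f z - fderiv ℝ f x)
    (C := C * ‖y - x‖) (x := x) (y := y) (fun z hz => ?_) (fun z hz => ?_)
    (Metric.mem_closedBall_self (norm_nonneg _)) (by simp [dist_eq_norm])
  · simp only [map_sub, norm_pow, norm_norm] at key ⊢
    convert key using 1
    · congr 1; abel
    · ring
  · exact (((hball z (hsub hz)).1.hasFDerivAt).sub (fderiv ℝ f x).hasFDerivAt).hasFDerivWithinAt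
  · exact (hball z (hsub hz)).2.trans
      (mul_le_mul_of_nonneg_left (by simpa [dist_eq_norm] using hz) hC0)

theorem DifferentiableAt.fderiv_apply_self_of_homogeneous {F : Type*} [NormedAddCommGroup F]
    [NormedSpace ℝ F] {f : F → ℝ} {x : F} (hf : DifferentiableAt ℝ f x)
    (hhom : ∀ l : ℝ, 0 < l → f (l • x) = l * f x) : fderiv ℝ f x x = f x := by
  have hray : HasDerivAt (fun l : ℝ => f (l • x)) (fderiv ℝ f x x) 1 := by
    have hpath : HasDerivAt (fun l : ℝ => l • x) x 1 := by
      simpa using (hasDerivAt_id (1 : ℝ)).smul_const x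
    exact hf.hasFDerivAt.comp_hasDerivAt_of_eq (1 : ℝ) hpath (one_smul ℝ x).symm
  have hlin : HasDerivAt (fun l : ℝ => f (l • x)) (f x) 1 := by
    refine (((hasDerivAt_id (1 : ℝ)).mul_const (f x)).congr_of_eventuallyEq ?_).congr_deriv
      (one_mul _)
    filter_upwards [lt_mem_nhds one_pos] with l hl using hhom l hl
  exact hray.unique hlin

section Defect
variable {F : Type*} [NormedAddCommGroup F] [InnerProductSpace ℝ F]

def sphereDefect (γ : F → ℝ) (n u : F) : ℝ :=
  (γ u + fderiv ℝ γ n u) ^ 2 - 8 * γ n * ⟪n, u⟫ * fderiv ℝ γ n u + 4 * γ n ^ 2 * ‖u‖ ^ 2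

variable {γ : F → ℝ} {n : F}

theorem contDiffAt_sphereDefect {p : F} (hγ : ContDiffAt ℝ 2 γ p) :
    ContDiffAt ℝ 2 (sphereDefect γ n) p := by
  have hℓ := (fderiv ℝ γ n).contDiff (n := 2)
  have hi := (innerSL ℝ n).contDiff (n := 2)
  exact ((hγ.add hℓ.contDiffAt).pow 2).sub
    ((contDiffAt_const.mul hi.contDiffAt).mul hℓ.contDiffAt) |>.add
    (contDiffAt_const.mul (contDiff_norm_sq ℝ).contDiffAt)

theorem sphereDefect_self (hn : ‖n‖ = 1) (heuler : fderiv ℝ γ n n = γ n) :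
    sphereDefect γ n n = 0 := by
  simp only [sphereDefect, heuler, real_inner_self_eq_norm_sq, hn]
  ring

theorem sphereDefect_neg_self (hn : ‖n‖ = 1) (heuler : fderiv ℝ γ n n = γ n) :
    sphereDefect γ n (-n) = (γ (-n) - γ n) ^ 2 - 4 * γ n ^ 2 := by
  simp only [sphereDefect, map_neg, heuler, inner_neg_right, real_inner_self_eq_norm_sq,
    norm_neg, hn]
  ring

theorem hasFDerivAt_sphereDefect_self (hn : ‖n‖ = 1) (hγ : DifferentiableAt ℝ γ n)
    (heuler : fderiv ℝ γ n n = γ n) : HasFDerivAt (sphereDefect γ n) (0 : F →L[ℝ] ℝ) n := by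
  have hℓ := (fderiv ℝ γ n).hasFDerivAt (x := n)
  have h := (((hγ.hasFDerivAt.add hℓ).pow 2).sub
    ((((innerSL ℝ n).hasFDerivAt (x := n)).const_mul (8 * γ n)).mul hℓ)).add
    ((hasStrictFDerivAt_norm_sq n).hasFDerivAt.const_mul (4 * γ n ^ 2))
  refine (h.congr_fderiv ?_).congr_of_eventuallyEq (Eventually.of_forall fun u => ?_)
  · ext v
    simp [heuler, hn]
    ring
  · simp [sphereDefect, mul_assoc]

end Defect

theorem exists_le_mul_one_sub_inner_sq {F : Type*} [NormedAddCommGroup F]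
    [InnerProductSpace ℝ F] {G : F → ℝ} {n : F} (hn : ‖n‖ = 1) {M C : ℝ}
    (hM : ∀ u, ‖u‖ = 1 → G u ≤ M) (hnear : ∀ᶠ u in 𝓝 n, G u ≤ C * ‖u - n‖ ^ 2)
    (hfar : ∀ᶠ u in 𝓝 (-n), G u ≤ 0) :
    ∃ k, ∀ u, ‖u‖ = 1 → G u ≤ k * (1 - ⟪u, n⟫ ^ 2) := by
  obtain ⟨δ₁, hδ₁, hnear⟩ := Metric.eventually_nhds_iff.1 hnear
  obtain ⟨δ₂, hδ₂, hfar⟩ := Metric.eventually_nhds_iff.1 hfar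
  set δ := min δ₁ δ₂
  have hδ : 0 < δ := lt_min hδ₁ hδ₂
  refine ⟨2 * max C 0 + 2 * max M 0 / δ ^ 2, fun u hu => ?_⟩
  set x := ⟪u, n⟫
  have hx : |x| ≤ 1 := by simpa [hu, hn] using abs_real_inner_le_norm u n
  -- on the hemisphere `0 ≤ x` (resp. `x < 0`) this bounds `‖u - n‖²` (resp. `‖u + n‖²`)
  -- by `2 * (1 - x ^ 2)`
  have hsub : ‖u - n‖ ^ 2 = 2 - 2 * x := by rw [norm_sub_sq_real, hu, hn]; ring
  have hadd : ‖u + n‖ ^ 2 = 2 + 2 * x := by rw [norm_add_sq_real, hu, hn]; ring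
  have hx2 : 0 ≤ 1 - x ^ 2 := by nlinarith [abs_le.1 hx]
  have hCterm : 0 ≤ 2 * max C 0 * (1 - x ^ 2) := mul_nonneg (by positivity) hx2
  have hMterm : 0 ≤ 2 * max M 0 / δ ^ 2 * (1 - x ^ 2) := mul_nonneg (by positivity) hx2
  rw [add_mul]
  rcases lt_or_ge (2 * (1 - x ^ 2)) (δ ^ 2) with hsmall | hlarge
  · rcases le_or_gt 0 x with hx0 | hx0
    · have hsq : ‖u - n‖ ^ 2 ≤ 2 * (1 - x ^ 2) := by nlinarith [abs_le.1 hx]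
      have hdist : dist u n < δ₁ := by
        rw [dist_eq_norm]
        exact lt_of_pow_lt_pow_left₀ 2 hδ₁.le (by nlinarith [min_le_left δ₁ δ₂])
      calc G u ≤ C * ‖u - n‖ ^ 2 := hnear hdist
        _ ≤ max C 0 * (2 * (1 - x ^ 2)) :=
          mul_le_mul (le_max_left C 0) hsq (sq_nonneg _) (le_max_right C 0)
        _ ≤ _ := by linarith
    · have hdist : dist u (-n) < δ₂ := by
        rw [dist_eq_norm, sub_neg_eq_add]
        refine lt_of_pow_lt_pow_left₀ 2 hδ₂.le ?_
        nlinarith [min_le_right δ₁ δ₂, abs_le.1 hx]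
      linarith [hfar hdist]
  · have : M ≤ 2 * max M 0 / δ ^ 2 * (1 - x ^ 2) := by
      rw [div_mul_eq_mul_div, le_div_iff₀ (by positivity)]
      nlinarith [le_max_left M 0, le_max_right M 0]
    linarith [hM u hu]

theorem mul_le_add_div_of_sq_le {B Q c r ρ : ℝ} (hc : 0 < c) (hr : 0 < r)
    (h : B ^ 2 ≤ 4 * c * Q) : ρ * B ≤ r * c + ρ ^ 2 * Q / r := by
  rw [← sub_nonneg]
  have key : r * c + ρ ^ 2 * Q / r - ρ * B
      = ((2 * r * c - ρ * B) ^ 2 + ρ ^ 2 * (4 * c * Q - B ^ 2)) / (4 * r * c) := by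
    field_simp; ring
  rw [key]
  have := mul_nonneg (sq_nonneg ρ) (sub_nonneg.2 h)
  positivity

section Stability
variable {F : Type*} [NormedAddCommGroup F] [InnerProductSpace ℝ F] [FiniteDimensional ℝ F]
  {γ : F → ℝ} {n : F}

theorem exists_sphereDefect_le (hsmooth : ∀ p, p ≠ 0 → ContDiffAt ℝ 2 γ p)
    (hhom : ∀ l : ℝ, 0 < l → γ (l • n) = l * γ n) (hn : ‖n‖ = 1) (hneg : 0 < γ (-n))
    (hcond : γ (-n) < 3 * γ n) :
    ∃ k, ∀ u, ‖u‖ = 1 → sphereDefect γ n u ≤ k * (1 - ⟪u, n⟫ ^ 2) := by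
  have hn0 : n ≠ 0 := ne_zero_of_norm_ne_zero (by simp [hn])
  have hγn := hsmooth n hn0
  have heuler := (hγn.differentiableAt (by norm_num)).fderiv_apply_self_of_homogeneous hhom
  have hcont : ContinuousOn (sphereDefect γ n) (Metric.sphere 0 1) := fun u hu =>
    (contDiffAt_sphereDefect (hsmooth u (ne_zero_of_mem_unit_sphere ⟨u, hu⟩))).continuousAt
      |>.continuousWithinAt
  obtain ⟨M, hM⟩ := (isCompact_sphere (0 : F) 1).bddAbove_image hcont
  obtain ⟨C, hC⟩ := (contDiffAt_sphereDefect hγn).isBigO_sub_sub_fderiv.bound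
  have hnear : ∀ᶠ u in 𝓝 n, sphereDefect γ n u ≤ C * ‖u - n‖ ^ 2 := by
    filter_upwards [hC] with u hu
    rw [sphereDefect_self hn heuler,
      (hasFDerivAt_sphereDefect_self hn (hγn.differentiableAt (by norm_num)) heuler).fderiv] at hu
    simpa using (le_abs_self _).trans hu
  have hfar : ∀ᶠ u in 𝓝 (-n), sphereDefect γ n u ≤ 0 := by
    have hlt : sphereDefect γ n (-n) < 0 := by
      rw [sphereDefect_neg_self hn heuler]; nlinarith
    filter_upwards [(contDiffAt_sphereDefect (hsmooth (-n) (neg_ne_zero.2 hn0))).continuousAt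
      |>.eventually_lt continuousAt_const hlt] with u hu using hu.le
  exact exists_le_mul_one_sub_inner_sq hn (fun u hu => hM ⟨u, by simpa using hu, rfl⟩) hnear hfar

theorem exists_stability_bound (hsmooth : ∀ p, p ≠ 0 → ContDiffAt ℝ 2 γ p)
    (hhom : ∀ l : ℝ, 0 < l → ∀ p, γ (l • p) = l * γ p) (hn : ‖n‖ = 1) (hneg : 0 < γ (-n))
    (hcond : γ (-n) < 3 * γ n) :
    ∃ k, ∀ q, q ≠ 0 → ∀ r : ℝ, 0 < r → γ q + fderiv ℝ γ n q ≤
      r * γ n + (2 * ⟪n, q⟫ * fderiv ℝ γ n q - γ n * ‖q‖ ^ 2 + k * (‖q‖ ^ 2 - ⟪n, q⟫ ^ 2)) / r := by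
  obtain ⟨k, hk⟩ := exists_sphereDefect_le hsmooth (fun l hl => hhom l hl n) hn hneg hcond
  have hc : 0 < γ n := by linarith
  refine ⟨k / (4 * γ n), fun q hq r hr => ?_⟩
  set ρ := ‖q‖
  have hρ : 0 < ρ := norm_pos_iff.2 hq
  set u := ρ⁻¹ • q
  have hu : ‖u‖ = 1 := by
    rw [norm_smul, norm_inv, Real.norm_of_nonneg hρ.le, inv_mul_cancel₀ hρ.ne']
  have hqu : q = ρ • u := by simp [u, smul_smul, hρ.ne']
  have hdefect := hk u hu
  simp only [sphereDefect, hu, real_inner_comm n u] at hdefect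
  have hamgm := mul_le_add_div_of_sq_le (ρ := ρ) (B := γ u + fderiv ℝ γ n u)
    (Q := 2 * ⟪n, u⟫ * fderiv ℝ γ n u - γ n + k / (4 * γ n) * (1 - ⟪n, u⟫ ^ 2)) hc hr (by
      rw [mul_add, ← mul_assoc, mul_div_cancel₀ _ (by positivity)]; linarith)
  rw [hqu, hhom ρ hρ, map_smul, inner_smul_right]
  convert hamgm using 2 <;> simp only [smul_eq_mul] <;> ring

end Stability

theorem inner_eq_fin_two (p q : E) : ⟪p, q⟫ = p 0 * q 0 + p 1 * q 1 := by
  simp [PiLp.inner_apply, Fin.sum_univ_two, mul_comm]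

@[simp] theorem perp_apply_zero (p : E) : perp p 0 = p 1 := rfl
@[simp] theorem perp_apply_one (p : E) : perp p 1 = -p 0 := rfl

theorem perp_add (p q : E) : perp (p + q) = perp p + perp q := by
  ext i; fin_cases i <;> simp [add_comm]

theorem perp_smul (c : ℝ) (p : E) : perp (c • p) = c • perp p := by
  ext i; fin_cases i <;> simp

theorem perp_neg (p : E) : perp (-p) = -perp p := by
  ext i; fin_cases i <;> simp

theorem perp_perp (p : E) : perp (perp p) = -p := by
  ext i; fin_cases i <;> simp

theorem inner_perp_self (p : E) : ⟪perp p, p⟫ = 0 := by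
  simp [inner_eq_fin_two]; ring

theorem norm_perp (p : E) : ‖perp p‖ = ‖p‖ := by
  simp [EuclideanSpace.norm_eq, Fin.sum_univ_two, add_comm]

theorem eq_inner_smul_add_inner_smul_perp {t : E} (ht : ‖t‖ = 1) (p : E) :
    p = ⟪p, t⟫ • t + ⟪p, perp t⟫ • perp t := by
  have h1 : t 0 ^ 2 + t 1 ^ 2 = 1 := by
    simpa [EuclideanSpace.norm_eq, Fin.sum_univ_two, Real.sqrt_eq_one] using ht
  ext i; fin_cases i <;> simp [inner_eq_fin_two] <;> linear_combination (-p _) * h1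

theorem inner_Zmat_mulVec (γ : E → ℝ) (κ : ℝ) (n w d : E) :
    ⟪toE ((Zmat γ κ n).mulVec (toV w)), d⟫ = γ n * ⟪w, d⟫ - fderiv ℝ γ n w * ⟪n, d⟫
      - ⟪n, w⟫ * fderiv ℝ γ n d + κ * ⟪n, w⟫ * ⟪n, d⟫ := by
  rw [← inner_gradient_left, ← inner_gradient_left]
  simp [Zmat, inner_eq_fin_two, toE, toV, Matrix.vecMulVec_apply, -inner_gradient_left]
  ring

theorem sub_le_inner_Zmat_mulVec_of_le {γ : E → ℝ} {κ r : ℝ} {t w : E} (ht : ‖t‖ = 1)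
    (hr : 0 < r) (heuler : fderiv ℝ γ (-perp t) (-perp t) = γ (-perp t))
    (hbound : γ (-perp w) + fderiv ℝ γ (-perp t) (-perp w) ≤ r * γ (-perp t) +
      (2 * ⟪-perp t, -perp w⟫ * fderiv ℝ γ (-perp t) (-perp w) - γ (-perp t) * ‖-perp w‖ ^ 2
        + κ * (‖-perp w‖ ^ 2 - ⟪-perp t, -perp w⟫ ^ 2)) / r) :
    γ (-perp w) - r * γ (-perp t) ≤
      ⟪toE ((Zmat γ κ (-perp t)).mulVec (toV (r⁻¹ • w))), w - r • t⟫ := by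
  set n := -perp t with hn_def
  have hperpn : perp n = t := by rw [perp_neg, perp_perp, neg_neg]
  have hnn : ⟪n, n⟫ = 1 := by rw [real_inner_self_eq_norm_sq, norm_neg, norm_perp, ht]; norm_num
  have htt : ⟪t, t⟫ = 1 := by rw [real_inner_self_eq_norm_sq, ht]; norm_num
  have hnt : ⟪n, t⟫ = 0 := by rw [← hperpn, real_inner_comm, inner_perp_self]
  have htn : ⟪t, n⟫ = 0 := by rw [real_inner_comm, hnt]
  obtain ⟨α, β, rfl⟩ : ∃ α β : ℝ, w = α • t + β • n :=
    ⟨⟪w, t⟫, ⟪w, n⟫, by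
      rw [hn_def, inner_neg_right, neg_smul, smul_neg, neg_neg]
      exact eq_inner_smul_add_inner_smul_perp ht w⟩
  clear_value n
  have hq : -perp (α • t + β • n) = α • n - β • t := by
    rw [perp_add, perp_smul, perp_smul, hperpn, ← neg_neg (perp t), ← hn_def]; module
  have hnorm : ‖α • n - β • t‖ ^ 2 = α ^ 2 + β ^ 2 := by
    rw [← real_inner_self_eq_norm_sq]
    simp only [inner_sub_left, inner_sub_right, real_inner_smul_left, real_inner_smul_right, hnn,
      htt, hnt, htn]
    ring
  rw [hq, hnorm] at hbound
  rw [hq, inner_Zmat_mulVec]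
  simp only [inner_add_left, inner_add_right, inner_sub_right, real_inner_smul_left,
    real_inner_smul_right, map_add, map_sub, map_smul, smul_eq_mul, hnn, htt, hnt, htn,
    heuler] at hbound ⊢
  field_simp at hbound ⊢
  linarith

/-- Main stability lemma: existence of a stabilizing function k. -/
theorem stability_lemma (γ : E → ℝ)
    (hsmooth : ∀ p : E, p ≠ 0 → ContDiffAt ℝ 2 γ p)
    (hhom : ∀ l : ℝ, 0 < l → ∀ p : E, γ (l • p) = l * γ p)
    (hpos : ∀ p : E, p ≠ 0 → 0 < γ p)
    (hcond : ∀ n : E, ‖n‖ = 1 → γ (-n) < 3 * γ n) :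
    ∃ k : E → ℝ, ∀ h hh : E, h ≠ 0 → hh ≠ 0 →
      γ (-perp hh) - γ (-perp h)
        ≤ ⟪toE ((Zmat γ (k (‖h‖⁻¹ • (-perp h))) (‖h‖⁻¹ • (-perp h))).mulVec
            (toV (‖h‖⁻¹ • hh))), hh - h⟫ := by
  choose! k hk using fun n (hn : ‖n‖ = 1) => exists_stability_bound hsmooth hhom hn
    (hpos (-n) (neg_ne_zero.2 (ne_zero_of_norm_ne_zero (by simp [hn])))) (hcond n hn)
  refine ⟨k, fun h w hh hw => ?_⟩
  set r := ‖h‖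
  have hr : 0 < r := norm_pos_iff.2 hh
  set t := r⁻¹ • h
  have ht : ‖t‖ = 1 := by
    rw [norm_smul, norm_inv, Real.norm_of_nonneg hr.le, inv_mul_cancel₀ hr.ne']
  have hht : h = r • t := by simp [t, smul_smul, hr.ne']
  have hn : ‖-perp t‖ = 1 := by rw [norm_neg, norm_perp, ht]
  have hq0 : -perp w ≠ 0 := by
    rw [← norm_ne_zero_iff, norm_neg, norm_perp, norm_ne_zero_iff]; exact hw
  have hγh : γ (-perp h) = r * γ (-perp t) := by rw [hht, perp_smul, ← smul_neg, hhom r hr]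
  have hnormal : r⁻¹ • -perp h = -perp t := by rw [smul_neg, ← perp_smul]
  rw [hnormal, hγh, hht]
  exact sub_le_inner_Zmat_mulVec_of_le ht hr
    ((hsmooth _ (ne_zero_of_norm_ne_zero (by simp [hn]))).differentiableAt (by norm_num)
      |>.fderiv_apply_self_of_homogeneous fun l hl => hhom l hl _) (hk _ hn _ hq0 r hr)
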